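/- For d ≥ 2 and n ≥ 2d+1, σ⁻¹(C_n^d) ≥ 2d. -/

import Mathlib

/-- A coloring `f : V → Fin 2` is balanced if its two color class sizes differ by at most 1. -/
def BalancedColoring {V : Type*} (f : V → Fin 2) : Prop :=
  (Nat.card {v | f v = 0} : ℤ) - (Nat.card {v | f v = 1} : ℤ) ≤ 1 ∧
  (Nat.card {v | f v = 1} : ℤ) - (Nat.card {v | f v = 0} : ℤ) ≤ 1

/-- The set `g(f)` of bichromatic edges of `G` under the coloring `f`. -/
def bichromatic {V : Type*} (G : SimpleGraph V) (f : V → Fin 2) : Set (Sym2 V) :=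
  {e | e ∈ G.edgeSet ∧ Sym2.lift ⟨fun a b => f a ≠ f b, fun a b => by simp [ne_comm]⟩ e}

/-- `|g(f)|`, the number of bichromatic edges. -/
noncomputable def mixedCount {V : Type*} (G : SimpleGraph V) (f : V → Fin 2) : ℕ :=
  (bichromatic G f).ncard

/-- The rna number / minimum bisection width `σ⁻¹(G)`. -/
noncomputable def rna {V : Type*} (G : SimpleGraph V) : ℕ :=
  sInf {k | ∃ f : V → Fin 2, BalancedColoring f ∧ mixedCount G f = k}

/-- The `d`-th power of the cycle `C_n`, with vertex set `ZMod n`. -/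
def cyclePow (n d : ℕ) : SimpleGraph (ZMod n) where
  Adj u v := u ≠ v ∧ ∃ j : ℕ, 1 ≤ j ∧ j ≤ d ∧ (v = u + (j : ZMod n) ∨ u = v + (j : ZMod n))
  symm := by
    constructor
    rintro u v ⟨h, j, h1, h2, h3⟩
    exact ⟨h.symm, j, h1, h2, h3.symm⟩
  loopless := by constructor; rintro u ⟨h, -⟩; exact h rfl

/-! A non-constant colouring `f : ZMod n → Fin 2` has, for every step `j` that is not a period
of `f`, as many ascents (`f x = 0`, `f (x + j) = 1`) as descents, hence at least two bichromatic
pairs `{x, x + j}`; if `f` also has a nonzero period `p`, the ascents are invariant under `+ p`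
and there are at least four. On `[1, d]`, `j ↦ j - 1` maps periods injectively to non-periods
(`1` is not a period of a non-constant `f`), so the steps `j ∈ [1, d]` give at least `2 d`
bichromatic pairs, and for `n ≥ 2 d + 1` these are distinct edges of `C_n^d`. -/

open Finset Function

theorem exists_balancedColoring (V : Type*) [Finite V] : ∃ f : V → Fin 2, BalancedColoring f := by
  classical
  have := Fintype.ofFinite V
  obtain ⟨S, -, hS⟩ := exists_subset_card_eq (s := (univ : Finset V)) (Nat.div_le_self _ 2)
  refine ⟨fun v => if v ∈ S then 0 else 1, ?_⟩
  have h0 : {v | (if v ∈ S then 0 else 1 : Fin 2) = 0} = S := by ext v; by_cases v ∈ S <;> simp [*]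
  have h1 : {v | (if v ∈ S then 0 else 1 : Fin 2) = 1} = ↑Sᶜ := by
    ext v; by_cases v ∈ S <;> simp [*]
  simp only [BalancedColoring, h0, h1, Nat.card_coe_set_eq, Set.ncard_coe_finset, card_compl, hS,
    card_univ]
  omega

theorem BalancedColoring.exists_ne {V : Type*} [Finite V] {f : V → Fin 2}
    (hf : BalancedColoring f) (hV : 2 ≤ Nat.card V) : ∃ x y, f x ≠ f y := by
  by_contra! hconst
  have hcompl : {v | f v = 1} = {v | f v = 0}ᶜ := by
    ext v
    simpa using (show ∀ a : Fin 2, a = 1 ↔ a ≠ 0 by decide) (f v)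
  have hsum := Set.ncard_add_ncard_compl {v | f v = 0}
  obtain ⟨x⟩ : Nonempty V := (Nat.card_pos_iff.mp (by omega)).1
  have hempty : {v | f v = 0} = ∅ ∨ {v | f v = 0}ᶜ = ∅ := by
    rcases (show ∀ a : Fin 2, a = 0 ∨ a = 1 by decide) (f x) with h | h
    · exact .inr (by ext v; simp [hconst v x, h])
    · exact .inl (by ext v; simp [hconst v x, h])
  obtain ⟨h0, h1⟩ := hf
  rw [hcompl, Nat.card_coe_set_eq, Nat.card_coe_set_eq] at h0 h1
  rcases hempty with h | h <;> simp only [h, Set.ncard_empty] at h0 h1 hsum <;> omega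

namespace TwoColoring

variable {G : Type*} [AddCommGroup G] [Fintype G]

def ascents (f : G → Fin 2) (j : G) : Finset G := {x | f x = 0 ∧ f (x + j) = 1}

def descents (f : G → Fin 2) (j : G) : Finset G := {x | f x = 1 ∧ f (x + j) = 0}

def changes (f : G → Fin 2) (j : G) : Finset G := {x | f x ≠ f (x + j)}

theorem card_ascents_eq_card_descents (f : G → Fin 2) (j : G) :
    #(ascents f j) = #(descents f j) := by
  have hpoint : ∀ a b : Fin 2,
      ((if a = 0 ∧ b = 1 then 1 else 0 : ℤ) - if a = 1 ∧ b = 0 then 1 else 0)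
        = (if b = 1 then 1 else 0) - if a = 1 then 1 else 0 := by decide
  have hshift : ∑ x, (if f (x + j) = 1 then 1 else 0 : ℤ) = ∑ x, if f x = 1 then 1 else 0 :=
    Fintype.sum_equiv (Equiv.addRight j) _ _ fun _ => rfl
  have : (#(ascents f j) : ℤ) - #(descents f j) = 0 := by
    simp only [ascents, descents, card_filter, Nat.cast_sum, Nat.cast_ite, Nat.cast_one,
      Nat.cast_zero, ← sum_sub_distrib, hpoint]
    rw [sum_sub_distrib, hshift, sub_self]
  omega

theorem card_changes (f : G → Fin 2) (j : G) : #(changes f j) = 2 * #(ascents f j) := by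
  classical
  have hsplit : changes f j = ascents f j ∪ descents f j := by
    ext x
    have : ∀ a b : Fin 2, a ≠ b ↔ a = 0 ∧ b = 1 ∨ a = 1 ∧ b = 0 := by decide
    simp only [changes, ascents, descents, mem_union, mem_filter, mem_univ, true_and, this]
  have hdisj : Disjoint (ascents f j) (descents f j) := by
    simp only [ascents, descents, disjoint_filter]
    rintro x - ⟨h, -⟩ ⟨h', -⟩
    exact absurd (h.symm.trans h') (by decide)
  rw [hsplit, card_union_of_disjoint hdisj, ← card_ascents_eq_card_descents, two_mul]

theorem ascents_nonempty {f : G → Fin 2} {j : G} (hj : ¬ Periodic f j) :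
    (ascents f j).Nonempty := by
  obtain ⟨x, hx⟩ := not_forall.mp hj
  have : 0 < #(changes f j) := card_pos.mpr ⟨x, by simpa [changes, eq_comm] using hx⟩
  rw [card_changes] at this
  exact card_pos.mp (by omega)

theorem two_le_card_changes {f : G → Fin 2} {j : G} (hj : ¬ Periodic f j) :
    2 ≤ #(changes f j) := by
  rw [card_changes]
  have := card_pos.mpr (ascents_nonempty hj)
  omega

theorem four_le_card_changes {f : G → Fin 2} {j p : G} (hj : ¬ Periodic f j)
    (hp : Periodic f p) (hp0 : p ≠ 0) : 4 ≤ #(changes f j) := by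
  obtain ⟨x, hx⟩ := ascents_nonempty hj
  have hxp : x + p ∈ ascents f j := by
    simp only [ascents, mem_filter, mem_univ, true_and] at hx ⊢
    rwa [hp, add_right_comm, hp]
  have : 1 < #(ascents f j) := one_lt_card.mpr ⟨x, hx, x + p, hxp, by simpa using hp0⟩
  rw [card_changes]
  omega

end TwoColoring

open TwoColoring

theorem ZMod.natCast_ne_zero_of_lt {n k : ℕ} (hk0 : 0 < k) (hkn : k < n) :
    (k : ZMod n) ≠ 0 := by
  rw [Ne, ZMod.natCast_eq_zero_iff]
  exact fun h => absurd (Nat.le_of_dvd hk0 h) (by omega)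

theorem not_periodic_one_of_ne {n : ℕ} [NeZero n] {α : Type*} {f : ZMod n → α} {x y : ZMod n}
    (hxy : f x ≠ f y) : ¬ Periodic f 1 := by
  intro h
  have hconst : ∀ z : ZMod n, f z = f 0 := fun z => by
    simpa [ZMod.natCast_zmod_val] using h.nat_mul_eq z.val
  exact hxy ((hconst x).trans (hconst y).symm)

theorem two_mul_le_sum_card_changes {n d : ℕ} [NeZero n] (hdn : d < n) (f : ZMod n → Fin 2)
    (hf : ¬ Periodic f 1) : 2 * d ≤ ∑ j ∈ Icc 1 d, #(changes f (j : ZMod n)) := by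
  classical
  set J := (Icc 1 d).filter fun j : ℕ => Periodic f (j : ZMod n)
  set K := (Icc 1 d).filter fun j : ℕ => ¬ Periodic f (j : ZMod n)
  have hJK : #J + #K = d := by
    rw [card_filter_add_card_filter_not, Nat.card_Icc, Nat.add_sub_cancel]
  have hK : ∑ j ∈ K, #(changes f (j : ZMod n)) ≤ ∑ j ∈ Icc 1 d, #(changes f (j : ZMod n)) :=
    sum_le_sum_of_subset (filter_subset _ _)
  rcases J.eq_empty_or_nonempty with hJ | ⟨p, hp⟩
  · have := card_nsmul_le_sum K (fun j => #(changes f (j : ZMod n))) 2 fun j hj =>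
      two_le_card_changes (mem_filter.mp hj).2
    rw [hJ, card_empty] at hJK
    simp only [smul_eq_mul] at this
    omega
  · rw [mem_filter, mem_Icc] at hp
    have hp0 : (p : ZMod n) ≠ 0 := ZMod.natCast_ne_zero_of_lt (by omega) (by omega)
    have := card_nsmul_le_sum K (fun j => #(changes f (j : ZMod n))) 4 fun j hj =>
      four_le_card_changes (mem_filter.mp hj).2 hp.2 hp0
    have hJK' : #J ≤ #K := by
      refine card_le_card_of_injOn (· - 1) (fun j hj => ?_) fun a ha b hb hab => ?_
      · simp only [J, K, mem_coe, mem_filter, mem_Icc] at hj ⊢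
        have hj1 : j ≠ 1 := by rintro rfl; exact hf (by simpa using hj.2)
        refine ⟨by omega, fun hj' => hf ?_⟩
        simpa [Nat.cast_sub (show 1 ≤ j by omega)] using hj.2.sub_period hj'
      · simp only [J, mem_coe, mem_filter, mem_Icc] at ha hb
        simp only at hab
        omega
    simp only [smul_eq_mul] at this
    omega

theorem sum_card_changes_le_mixedCount {n d : ℕ} [NeZero n] (hn : 2 * d + 1 ≤ n)
    (f : ZMod n → Fin 2) :
    ∑ j ∈ Icc 1 d, #(changes f (j : ZMod n)) ≤ mixedCount (cyclePow n d) f := by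
  rw [← card_sigma, ← Set.ncard_coe_finset, mixedCount]
  refine Set.ncard_le_ncard_of_injOn (fun e => s(e.2, e.2 + (e.1 : ZMod n)))
    (fun ⟨j, x⟩ hjx => ?_) (fun ⟨a, x⟩ hax ⟨b, y⟩ hby hxy => ?_) (Set.toFinite _)
  · simp only [coe_sigma, Set.mem_sigma_iff, mem_coe, mem_Icc, changes, mem_filter, mem_univ,
      true_and] at hjx
    refine ⟨⟨fun h => hjx.2 (congrArg f h), j, hjx.1.1, hjx.1.2, Or.inl rfl⟩, ?_⟩
    simpa using hjx.2
  · simp only [coe_sigma, Set.mem_sigma_iff, mem_coe, mem_Icc] at hax hby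
    simp only at hxy
    rcases Sym2.eq_iff.mp hxy with h | h
    · obtain ⟨rfl, h⟩ := h
      have : a = b := by
        rw [add_left_cancel_iff, ZMod.natCast_eq_natCast_iff', Nat.mod_eq_of_lt (by omega),
          Nat.mod_eq_of_lt (by omega)] at h
        exact h
      subst this
      rfl
    · refine absurd ?_ (ZMod.natCast_ne_zero_of_lt (n := n) (k := a + b) (by omega) (by omega))
      push_cast
      linear_combination h.2 - h.1

theorem stmt12_general (d n : ℕ) (hn : 2 * d + 1 ≤ n) :
    2 * d ≤ rna (cyclePow n d) := by
  obtain rfl | hd := Nat.eq_zero_or_pos d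
  · omega
  have : NeZero n := ⟨by omega⟩
  obtain ⟨f₀, hf₀⟩ := exists_balancedColoring (ZMod n)
  refine le_csInf ⟨_, f₀, hf₀, rfl⟩ ?_
  rintro _ ⟨f, hf, rfl⟩
  obtain ⟨x, y, hxy⟩ := hf.exists_ne (by rw [Nat.card_zmod]; omega)
  calc 2 * d ≤ ∑ j ∈ Icc 1 d, #(changes f (j : ZMod n)) :=
        two_mul_le_sum_card_changes (by omega) f (not_periodic_one_of_ne hxy)
    _ ≤ mixedCount (cyclePow n d) f := sum_card_changes_le_mixedCount hn f

theorem stmt12 (d n : ℕ) (hd : 2 ≤ d) (hn : 2 * d + 1 ≤ n) :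
    2 * d ≤ rna (cyclePow n d) :=
  stmt12_general d n hn
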